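/- Let λ ∈ ℂ with λ ≠ 0, B = λI ∈ M_3(ℂ), and let φ = (φ_1,φ_2,φ_3) : 𝔻 → 𝔾_3 be holomorphic with φ(0) = 0. Then there exists a holomorphic map ψ : 𝔻 → Ω_3 satisfying σ∘ψ = φ, ψ(0) = 0 and ψ′(0) = B if and only if: φ_1′(0) = 3λ, φ_2′(0) = 0, φ_2″(0)/2 = 3λ², φ_3′(0) = φ_3″(0) = 0, φ_3‴(0)/3! = λ³, φ_2‴(0)/3! = λ φ_1″(0), φ_3⁽⁴⁾(0)/4! = λ² φ_1″(0)/2, and φ_3⁽⁵⁾(0)/5! − λ φ_2⁽⁴⁾(0)/4! + λ² φ_1‴(0)/3! = 0. -/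

import Mathlib

open Metric Matrix Polynomial Set Filter

noncomputable section

/-- The open unit disc in `ℂ`. -/
def unitDisc : Set ℂ := Metric.ball 0 1

/-- The spectral ball `Ω_n`: matrices whose spectral radius is `< 1`, i.e. all
eigenvalues have modulus `< 1`. -/
def SpectralBall (n : ℕ) : Set (Matrix (Fin n) (Fin n) ℂ) :=
  {A | ∀ z ∈ spectrum ℂ A, ‖z‖ < 1}

/-- `σ(A) = (σ_1(A), …, σ_n(A))`, the signed coefficients of the characteristic
polynomial: `det (t•I − A) = ∑_{j=0}^n (−1)^j σ_j(A) t^(n−j)`.  Index `i : Fin n`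
corresponds to `σ_{i+1}`. -/
def sigmaCoeff (n : ℕ) (A : Matrix (Fin n) (Fin n) ℂ) : Fin n → ℂ :=
  fun i => (-1 : ℂ) ^ ((i : ℕ) + 1) * A.charpoly.coeff (n - ((i : ℕ) + 1))

/-- The symmetrized polydisc `𝔾_n = σ(Ω_n)`. -/
def SymPolydisc (n : ℕ) : Set (Fin n → ℂ) :=
  sigmaCoeff n '' SpectralBall n

/-- A matrix is scalar if it is `c • I` for some `c : ℂ`. -/
def IsScalarMatrix {n : ℕ} (A : Matrix (Fin n) (Fin n) ℂ) : Prop :=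
  ∃ c : ℂ, A = c • (1 : Matrix (Fin n) (Fin n) ℂ)

/-- A matrix is cyclic (non-derogatory) if it admits a cyclic vector `v`, i.e.
`v, A v, …, A^(n−1) v` span `ℂ^n`. -/
def IsCyclicMatrix {n : ℕ} (A : Matrix (Fin n) (Fin n) ℂ) : Prop :=
  ∃ v : Fin n → ℂ,
    Submodule.span ℂ (Set.range fun i : Fin n => (A ^ (i : ℕ)).mulVec v) = ⊤

/-- A matrix-valued map is holomorphic on the unit disc if each entry is. -/
def MatHolo {n : ℕ} (ψ : ℂ → Matrix (Fin n) (Fin n) ℂ) : Prop :=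
  ∀ i j : Fin n, DifferentiableOn ℂ (fun z => ψ z i j) unitDisc

/-- A matrix-valued map is bounded on the unit disc. -/
def MatBounded {n : ℕ} (ψ : ℂ → Matrix (Fin n) (Fin n) ℂ) : Prop :=
  ∃ C : ℝ, ∀ z ∈ unitDisc, ∀ i j : Fin n, ‖ψ z i j‖ ≤ C

/-- The spectral radius of a matrix. -/
def specRad (n : ℕ) (A : Matrix (Fin n) (Fin n) ℂ) : ℝ :=
  sSup ((fun z => ‖z‖) '' spectrum ℂ A)

/-- The Lempert function of the spectral ball `Ω_n`. -/
def lempertOmega (n : ℕ) (A B : Matrix (Fin n) (Fin n) ℂ) : ℝ :=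
  sInf {r : ℝ | ∃ α : ℂ, α ∈ unitDisc ∧ ‖α‖ = r ∧
    ∃ ψ : ℂ → Matrix (Fin n) (Fin n) ℂ, MatHolo ψ ∧
      Set.MapsTo ψ unitDisc (SpectralBall n) ∧ ψ 0 = A ∧ ψ α = B}

/-- The Kobayashi–Royden pseudometric of the spectral ball `Ω_n`. -/
def kobayashiOmega (n : ℕ) (A B : Matrix (Fin n) (Fin n) ℂ) : ℝ :=
  sInf {γ : ℝ | 0 ≤ γ ∧ ∃ ψ : ℂ → Matrix (Fin n) (Fin n) ℂ, MatHolo ψ ∧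
    Set.MapsTo ψ unitDisc (SpectralBall n) ∧ ψ 0 = A ∧
    ∀ i j : Fin n, (γ : ℂ) * deriv (fun z => ψ z i j) 0 = B i j}

open Topology

/-! Put `D(z) := sigmaShift (λz) (φ z)`, the elementary symmetric functions of the eigenvalues
shifted by `-λz`, so that `D = σ(ψ - λz I)` whenever `σ ∘ ψ = φ`. A lift with `ψ(0) = 0` and
`ψ'(0) = λI` has the form `ψ = λz I + z² M` with `M` holomorphic, and then `D_k = z^{2k} σ_k(M)`
vanishes to order `2k` at `0`. Conversely, if `D_k = z^{2k} g_k` for holomorphic `g_k`, then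
`λz I + z² C(g)`, with `C(g)` the companion matrix of `(g_1, g_2, g_3)`, is a lift; it takes values
in `Ω_3` because `σ(A)` determines the spectrum of `A`. Expanding `D` in the Taylor coefficients
of `φ` shows that "the first `2k` Taylor coefficients of `D_k` vanish" is exactly the list of nine
conditions. -/

section TaylorCoeff

variable {𝕜 : Type*} [NontriviallyNormedField 𝕜]

def taylorCoeff (f : 𝕜 → 𝕜) (n : ℕ) : 𝕜 := iteratedDeriv n f 0 / n.factorial

@[simp]
lemma taylorCoeff_zero (f : 𝕜 → 𝕜) : taylorCoeff f 0 = f 0 := by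
  simp [taylorCoeff]

lemma taylorCoeff_one (f : 𝕜 → 𝕜) : taylorCoeff f 1 = deriv f 0 := by
  simp [taylorCoeff]

lemma Filter.EventuallyEq.taylorCoeff_eq {f g : 𝕜 → 𝕜} (hfg : f =ᶠ[𝓝 0] g) (n : ℕ) :
    taylorCoeff f n = taylorCoeff g n := by
  rw [taylorCoeff, taylorCoeff, hfg.iteratedDeriv_eq]

lemma taylorCoeff_add {f g : 𝕜 → 𝕜} {n : ℕ} (hf : ContDiffAt 𝕜 n f 0) (hg : ContDiffAt 𝕜 n g 0) :
    taylorCoeff (fun z => f z + g z) n = taylorCoeff f n + taylorCoeff g n := by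
  simp only [taylorCoeff, iteratedDeriv_fun_add hf hg, add_div]

lemma taylorCoeff_sub {f g : 𝕜 → 𝕜} {n : ℕ} (hf : ContDiffAt 𝕜 n f 0) (hg : ContDiffAt 𝕜 n g 0) :
    taylorCoeff (fun z => f z - g z) n = taylorCoeff f n - taylorCoeff g n := by
  simp only [taylorCoeff, iteratedDeriv_fun_sub hf hg, sub_div]

lemma taylorCoeff_const_mul (c : 𝕜) (f : 𝕜 → 𝕜) (n : ℕ) :
    taylorCoeff (fun z => c * f z) n = c * taylorCoeff f n := by
  simp only [taylorCoeff, iteratedDeriv_const_mul_field, mul_div_assoc]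

variable [CharZero 𝕜]

lemma iteratedDeriv_eq_factorial_mul_taylorCoeff (f : 𝕜 → 𝕜) (n : ℕ) :
    iteratedDeriv n f 0 = n.factorial * taylorCoeff f n := by
  rw [taylorCoeff, mul_div_cancel₀ _ (by exact_mod_cast n.factorial_ne_zero)]

lemma taylorCoeff_pow (k n : ℕ) : taylorCoeff (· ^ k : 𝕜 → 𝕜) n = if n = k then 1 else 0 := by
  rw [taylorCoeff, iteratedDeriv_fun_pow_zero]
  split_ifs with h
  · subst h; simp [n.factorial_ne_zero]
  · simp

lemma taylorCoeff_pow_mul {h : 𝕜 → 𝕜} {n : ℕ} (hh : ContDiffAt 𝕜 n h 0) (k : ℕ) :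
    taylorCoeff (fun z => z ^ k * h z) n = if k ≤ n then taylorCoeff h (n - k) else 0 := by
  rw [taylorCoeff, iteratedDeriv_fun_mul (by fun_prop) hh]
  simp only [iteratedDeriv_fun_pow_zero, Nat.cast_ite, Nat.cast_zero, mul_ite, ite_mul,
    mul_zero, zero_mul, Finset.sum_ite_eq', Finset.mem_range, Nat.lt_succ_iff]
  split_ifs with hk
  · have hck : (n.choose k * k.factorial : 𝕜) ≠ 0 := by
      exact_mod_cast (Nat.mul_pos (Nat.choose_pos hk) k.factorial_pos).ne'
    rw [taylorCoeff, ← Nat.choose_mul_factorial_mul_factorial hk]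
    push_cast
    rw [mul_div_mul_left _ _ hck]
  · exact zero_div _

lemma taylorCoeff_eq_zero_of_eventuallyEq_pow_mul {f h : 𝕜 → 𝕜} {k n : ℕ}
    (hf : f =ᶠ[𝓝 0] fun z => z ^ k * h z) (hh : ContDiffAt 𝕜 n h 0) (hn : n < k) :
    taylorCoeff f n = 0 := by
  rw [hf.taylorCoeff_eq, taylorCoeff_pow_mul hh, if_neg (not_le.mpr hn)]

end TaylorCoeff

lemma exists_eq_pow_mul_of_taylorCoeff_eq_zero {f : ℂ → ℂ} {U : Set ℂ} (hU : U ∈ 𝓝 0)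
    (hf : DifferentiableOn ℂ f U) {k : ℕ} (hk : ∀ n < k, taylorCoeff f n = 0) :
    ∃ g, DifferentiableOn ℂ g U ∧ ∀ z, f z = z ^ k * g z := by
  induction k generalizing f with
  | zero => exact ⟨f, hf, by simp⟩
  | succ k ih =>
    have hf0 : f 0 = 0 := by simpa using hk 0 k.succ_pos
    have hdslope : DifferentiableOn ℂ (dslope f 0) U := (Complex.differentiableOn_dslope hU).2 hf
    have hf_eq : f = fun z => z ^ 1 * dslope f 0 z := by
      funext z
      simpa [hf0] using (sub_smul_dslope f 0 z).symm
    obtain ⟨g, hg, hfg⟩ := ih hdslope fun n hn => by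
      have := hk (n + 1) (by omega)
      rwa [hf_eq, taylorCoeff_pow_mul (hdslope.analyticAt hU).contDiffAt, if_pos (by omega),
        Nat.add_sub_cancel] at this
    refine ⟨g, hg, fun z => ?_⟩
    calc f z = z ^ 1 * dslope f 0 z := congrFun hf_eq z
      _ = z ^ (k + 1) * g z := by rw [hfg]; ring

lemma charpoly_eq_of_sigmaCoeff_eq {n : ℕ} {A B : Matrix (Fin n) (Fin n) ℂ}
    (h : sigmaCoeff n A = sigmaCoeff n B) : A.charpoly = B.charpoly := by
  have hA := A.charpoly_natDegree_eq_dim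
  have hB := B.charpoly_natDegree_eq_dim
  rw [Fintype.card_fin] at hA hB
  ext k
  rcases lt_trichotomy k n with hk | rfl | hk
  · have hi := congrFun h ⟨n - 1 - k, by omega⟩
    simp only [sigmaCoeff, show n - (n - 1 - k + 1) = k by omega] at hi
    exact mul_left_cancel₀ (pow_ne_zero _ (by norm_num)) hi
  · have hA1 := A.charpoly_monic.coeff_natDegree
    have hB1 := B.charpoly_monic.coeff_natDegree
    rw [hA] at hA1
    rw [hB] at hB1
    rw [hA1, hB1]
  · rw [coeff_eq_zero_of_natDegree_lt (by omega), coeff_eq_zero_of_natDegree_lt (by omega)]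

lemma sigmaCoeff_mem_symPolydisc_iff {n : ℕ} {A : Matrix (Fin n) (Fin n) ℂ} :
    sigmaCoeff n A ∈ SymPolydisc n ↔ A ∈ SpectralBall n := by
  refine ⟨fun ⟨B, hB, hBA⟩ => ?_, fun hA => ⟨A, hA, rfl⟩⟩
  have hspec : spectrum ℂ A = spectrum ℂ B := by
    ext r
    simp only [mem_spectrum_iff_isRoot_charpoly, charpoly_eq_of_sigmaCoeff_eq hBA]
  intro z hz
  exact hB z (hspec ▸ hz)

lemma charpoly_fin_three (A : Matrix (Fin 3) (Fin 3) ℂ) :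
    A.charpoly = X ^ 3 - C (A 0 0 + A 1 1 + A 2 2) * X ^ 2
      + C (A 0 0 * A 1 1 - A 0 1 * A 1 0 + A 0 0 * A 2 2 - A 0 2 * A 2 0
        + A 1 1 * A 2 2 - A 1 2 * A 2 1) * X - C A.det := by
  rw [Matrix.charpoly, det_fin_three, det_fin_three]
  simp [Fin.ext_iff]
  ring

lemma sigmaCoeff_three (A : Matrix (Fin 3) (Fin 3) ℂ) :
    sigmaCoeff 3 A = ![A 0 0 + A 1 1 + A 2 2,
      A 0 0 * A 1 1 - A 0 1 * A 1 0 + A 0 0 * A 2 2 - A 0 2 * A 2 0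
        + A 1 1 * A 2 2 - A 1 2 * A 2 1, A.det] := by
  ext i
  fin_cases i <;> simp [sigmaCoeff, charpoly_fin_three, coeff_X, coeff_C, coeff_mul_X_pow']
  ring

def sigmaShift (c : ℂ) (x : Fin 3 → ℂ) : Fin 3 → ℂ :=
  ![x 0 - 3 * c, x 1 - 2 * c * x 0 + 3 * c ^ 2, x 2 - c * x 1 + c ^ 2 * x 0 - c ^ 3]

lemma sigmaShift_injective (c : ℂ) : Function.Injective (sigmaShift c) := by
  intro x y h
  have h0 := congrFun h 0
  have h1 := congrFun h 1
  have h2 := congrFun h 2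
  simp only [sigmaShift, cons_val_zero, cons_val_one, cons_val, sub_left_inj, add_left_inj]
    at h0 h1 h2
  ext i
  fin_cases i
  · show x 0 = y 0
    linear_combination h0
  · show x 1 = y 1
    linear_combination h1 + 2 * c * h0
  · show x 2 = y 2
    linear_combination h2 + c * h1 + c ^ 2 * h0

lemma sigmaCoeff_three_sub_smul_one (A : Matrix (Fin 3) (Fin 3) ℂ) (c : ℂ) :
    sigmaCoeff 3 (A - c • 1) = sigmaShift c (sigmaCoeff 3 A) := by
  ext i
  fin_cases i <;> simp [sigmaCoeff_three, sigmaShift, det_fin_three, one_apply] <;> ring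

lemma sigmaCoeff_three_smul (a : ℂ) (A : Matrix (Fin 3) (Fin 3) ℂ) (i : Fin 3) :
    sigmaCoeff 3 (a • A) i = a ^ ((i : ℕ) + 1) * sigmaCoeff 3 A i := by
  fin_cases i <;> simp [sigmaCoeff_three, det_fin_three] <;> ring

def companion3 (x : Fin 3 → ℂ) : Matrix (Fin 3) (Fin 3) ℂ :=
  !![0, 0, x 2; 1, 0, -x 1; 0, 1, x 0]

lemma sigmaCoeff_companion3 (x : Fin 3 → ℂ) : sigmaCoeff 3 (companion3 x) = x := by
  ext i
  fin_cases i <;> simp [sigmaCoeff_three, companion3, det_fin_three]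

lemma taylorCoeff_sigmaShift_zero (lam : ℂ) {φ : ℂ → Fin 3 → ℂ}
    (hφ : ∀ i, AnalyticAt ℂ (fun z => φ z i) 0) (n : ℕ) :
    taylorCoeff (fun z => sigmaShift (lam * z) (φ z) 0) n
      = taylorCoeff (fun z => φ z 0) n - 3 * lam * if n = 1 then 1 else 0 := by
  have hφ' := fun i => (hφ i).contDiffAt (n := n)
  have hexpand :
      (fun z => sigmaShift (lam * z) (φ z) 0) = fun z => φ z 0 - 3 * lam * z ^ 1 := by
    funext z; simp only [sigmaShift, cons_val_zero, pow_one, sub_right_inj]; ring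
  rw [hexpand, taylorCoeff_sub (by fun_prop) (by fun_prop), taylorCoeff_const_mul, taylorCoeff_pow]

lemma taylorCoeff_sigmaShift_one (lam : ℂ) {φ : ℂ → Fin 3 → ℂ}
    (hφ : ∀ i, AnalyticAt ℂ (fun z => φ z i) 0) (n : ℕ) :
    taylorCoeff (fun z => sigmaShift (lam * z) (φ z) 1) n
      = taylorCoeff (fun z => φ z 1) n
        - 2 * lam * (if 1 ≤ n then taylorCoeff (fun z => φ z 0) (n - 1) else 0)
        + 3 * lam ^ 2 * if n = 2 then 1 else 0 := by
  have hφ' := fun i => (hφ i).contDiffAt (n := n)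
  have hexpand : (fun z => sigmaShift (lam * z) (φ z) 1)
      = fun z => φ z 1 - 2 * lam * (z ^ 1 * φ z 0) + 3 * lam ^ 2 * z ^ 2 := by
    funext z; simp only [sigmaShift, cons_val_one, cons_val_zero, pow_one]; ring
  rw [hexpand, taylorCoeff_add (by fun_prop) (by fun_prop),
    taylorCoeff_sub (by fun_prop) (by fun_prop), taylorCoeff_const_mul, taylorCoeff_const_mul,
    taylorCoeff_pow, taylorCoeff_pow_mul (hφ' 0)]

lemma taylorCoeff_sigmaShift_two (lam : ℂ) {φ : ℂ → Fin 3 → ℂ}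
    (hφ : ∀ i, AnalyticAt ℂ (fun z => φ z i) 0) (n : ℕ) :
    taylorCoeff (fun z => sigmaShift (lam * z) (φ z) 2) n
      = taylorCoeff (fun z => φ z 2) n
        - lam * (if 1 ≤ n then taylorCoeff (fun z => φ z 1) (n - 1) else 0)
        + lam ^ 2 * (if 2 ≤ n then taylorCoeff (fun z => φ z 0) (n - 2) else 0)
        - lam ^ 3 * if n = 3 then 1 else 0 := by
  have hφ' := fun i => (hφ i).contDiffAt (n := n)
  have hexpand : (fun z => sigmaShift (lam * z) (φ z) 2)
      = fun z => φ z 2 - lam * (z ^ 1 * φ z 1) + lam ^ 2 * (z ^ 2 * φ z 0) - lam ^ 3 * z ^ 3 := by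
    funext z; simp only [sigmaShift, cons_val, pow_one]; ring
  rw [hexpand, taylorCoeff_sub (by fun_prop) (by fun_prop),
    taylorCoeff_add (by fun_prop) (by fun_prop), taylorCoeff_sub (by fun_prop) (by fun_prop),
    taylorCoeff_const_mul, taylorCoeff_const_mul, taylorCoeff_const_mul, taylorCoeff_pow,
    taylorCoeff_pow_mul (hφ' 0), taylorCoeff_pow_mul (hφ' 1)]

lemma lift_conditions_iff_taylorCoeff_sigmaShift_eq_zero (lam : ℂ) {φ : ℂ → Fin 3 → ℂ}
    (hφ : ∀ i, AnalyticAt ℂ (fun z => φ z i) 0) (hφ0 : φ 0 = 0) :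
    (deriv (fun z => φ z 0) 0 = 3 * lam ∧
        deriv (fun z => φ z 1) 0 = 0 ∧
        iteratedDeriv 2 (fun z => φ z 1) 0 / 2 = 3 * lam ^ 2 ∧
        deriv (fun z => φ z 2) 0 = 0 ∧
        iteratedDeriv 2 (fun z => φ z 2) 0 = 0 ∧
        iteratedDeriv 3 (fun z => φ z 2) 0 / (Nat.factorial 3 : ℂ) = lam ^ 3 ∧
        iteratedDeriv 3 (fun z => φ z 1) 0 / (Nat.factorial 3 : ℂ)
          = lam * iteratedDeriv 2 (fun z => φ z 0) 0 ∧
        iteratedDeriv 4 (fun z => φ z 2) 0 / (Nat.factorial 4 : ℂ)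
          = lam ^ 2 * iteratedDeriv 2 (fun z => φ z 0) 0 / 2 ∧
        iteratedDeriv 5 (fun z => φ z 2) 0 / (Nat.factorial 5 : ℂ)
          - lam * iteratedDeriv 4 (fun z => φ z 1) 0 / (Nat.factorial 4 : ℂ)
          + lam ^ 2 * iteratedDeriv 3 (fun z => φ z 0) 0 / (Nat.factorial 3 : ℂ)
          = 0) ↔
      ∀ i : Fin 3, ∀ n < 2 * ((i : ℕ) + 1),
        taylorCoeff (fun z => sigmaShift (lam * z) (φ z) i) n = 0 := by
  have h0 : ∀ i, taylorCoeff (fun z => φ z i) 0 = 0 := fun i => by simp [hφ0]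
  simp only [Fin.forall_fin_succ, IsEmpty.forall_iff, and_true, Nat.forall_lt_succ_left,
    Nat.not_lt_zero, Fin.succ_zero_eq_one, Fin.succ_one_eq_two, Fin.val_zero, Fin.val_one,
    Fin.val_two, taylorCoeff_sigmaShift_zero lam hφ, taylorCoeff_sigmaShift_one lam hφ,
    taylorCoeff_sigmaShift_two lam hφ,
    ← iteratedDeriv_one, iteratedDeriv_eq_factorial_mul_taylorCoeff]
  norm_num [Nat.factorial, h0]
  generalize taylorCoeff (fun z => φ z 0) = a, taylorCoeff (fun z => φ z 1) = b,
    taylorCoeff (fun z => φ z 2) = c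
  constructor
  · rintro ⟨L1, L2, L3, L4, L5, L6, L7, L8, L9⟩
    refine ⟨by linear_combination L1, ⟨L2, by linear_combination L3 - 2 * lam * L1,
      by linear_combination L7⟩, L4, by linear_combination L5 - lam * L2,
      by linear_combination L6 - lam * L3 + lam ^ 2 * L1, by linear_combination L8 - lam * L7,
      by linear_combination L9⟩
  · rintro ⟨R1, ⟨R2, R3, R4⟩, R5, R6, R7, R8, R9⟩
    refine ⟨by linear_combination R1, R2, by linear_combination R3 + 2 * lam * R1, R5,
      by linear_combination R6 + lam * R2, by linear_combination R7 + lam * R3 + lam ^ 2 * R1,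
      by linear_combination R4, by linear_combination R8 + lam * R4, by linear_combination R9⟩

lemma unitDisc_mem_nhds_zero : unitDisc ∈ 𝓝 (0 : ℂ) := ball_mem_nhds 0 one_pos

namespace MatHolo

variable {n : ℕ} {M : ℂ → Matrix (Fin n) (Fin n) ℂ}

lemma smul_add_sq_smul (hM : MatHolo M) (B : Matrix (Fin n) (Fin n) ℂ) :
    MatHolo fun z => z • B + z ^ 2 • M z := by
  intro i j
  have := hM i j
  simp only [Matrix.add_apply, Matrix.smul_apply, smul_eq_mul]
  fun_prop

lemma deriv_smul_add_sq_smul_apply (hM : MatHolo M) (B : Matrix (Fin n) (Fin n) ℂ)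
    (i j : Fin n) :
    deriv (fun z => (z • B + z ^ 2 • M z) i j) 0 = B i j := by
  have hMij := ((hM i j).differentiableAt unitDisc_mem_nhds_zero).hasDerivAt
  simp only [Matrix.add_apply, Matrix.smul_apply, smul_eq_mul]
  simpa using (((hasDerivAt_id' (0 : ℂ)).mul_const (B i j)).fun_add
    ((hasDerivAt_pow 2 (0 : ℂ)).fun_mul hMij)).deriv

lemma exists_eq_smul_add_sq_smul {ψ : ℂ → Matrix (Fin n) (Fin n) ℂ} (hψ : MatHolo ψ)
    (hψ0 : ψ 0 = 0) {B : Matrix (Fin n) (Fin n) ℂ}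
    (hψ' : ∀ i j, deriv (fun z => ψ z i j) 0 = B i j) :
    ∃ M : ℂ → Matrix (Fin n) (Fin n) ℂ, MatHolo M ∧ ∀ z, ψ z = z • B + z ^ 2 • M z := by
  have hfactor : ∀ i j, ∃ g : ℂ → ℂ, DifferentiableOn ℂ g unitDisc ∧
      ∀ z, ψ z i j - B i j * z = z ^ 2 * g z := by
    intro i j
    have hψij := (hψ i j).differentiableAt unitDisc_mem_nhds_zero
    refine exists_eq_pow_mul_of_taylorCoeff_eq_zero (f := fun z => ψ z i j - B i j * z)
      unitDisc_mem_nhds_zero ((hψ i j).sub (by fun_prop)) fun m hm => ?_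
    interval_cases m
    · simp [hψ0]
    · rw [taylorCoeff_one, deriv_fun_sub hψij (by fun_prop), hψ']
      simp
  choose g hg hfac using hfactor
  refine ⟨fun z => Matrix.of fun i j => g i j z, hg, fun z => ?_⟩
  ext i j
  simp only [Matrix.add_apply, Matrix.smul_apply, smul_eq_mul, of_apply]
  linear_combination hfac i j z

end MatHolo

lemma MatHolo.differentiableOn_sigmaCoeff_three {M : ℂ → Matrix (Fin 3) (Fin 3) ℂ}
    (hM : MatHolo M) (i : Fin 3) : DifferentiableOn ℂ (fun z => sigmaCoeff 3 (M z) i) unitDisc := by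
  have hMij : ∀ i j, DifferentiableOn ℂ (fun z => M z i j) unitDisc := hM
  fin_cases i <;> simp [sigmaCoeff_three, det_fin_three] <;> fun_prop

lemma taylorCoeff_sigmaShift_eq_zero_of_lift {lam : ℂ} {φ : ℂ → Fin 3 → ℂ}
    {ψ : ℂ → Matrix (Fin 3) (Fin 3) ℂ} (hψ : MatHolo ψ)
    (hσ : ∀ z ∈ unitDisc, sigmaCoeff 3 (ψ z) = φ z) (hψ0 : ψ 0 = 0)
    (hψ' : ∀ i j, deriv (fun z => ψ z i j) 0 = (lam • (1 : Matrix (Fin 3) (Fin 3) ℂ)) i j)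
    (i : Fin 3) {n : ℕ} (hn : n < 2 * ((i : ℕ) + 1)) :
    taylorCoeff (fun z => sigmaShift (lam * z) (φ z) i) n = 0 := by
  obtain ⟨M, hM, hψM⟩ := hψ.exists_eq_smul_add_sq_smul hψ0 hψ'
  have hdefect : ∀ z ∈ unitDisc,
      sigmaShift (lam * z) (φ z) i = z ^ (2 * ((i : ℕ) + 1)) * sigmaCoeff 3 (M z) i := by
    intro z hz
    rw [← hσ z hz, ← sigmaCoeff_three_sub_smul_one, hψM z, smul_smul, mul_comm z lam,
      add_sub_cancel_left, sigmaCoeff_three_smul, pow_mul]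
  exact taylorCoeff_eq_zero_of_eventuallyEq_pow_mul
    (eventually_of_mem unitDisc_mem_nhds_zero hdefect)
    ((hM.differentiableOn_sigmaCoeff_three i).analyticAt unitDisc_mem_nhds_zero).contDiffAt hn

lemma exists_lift_of_taylorCoeff_sigmaShift_eq_zero {lam : ℂ} {φ : ℂ → Fin 3 → ℂ}
    (hφ : DifferentiableOn ℂ φ unitDisc) (hφmaps : Set.MapsTo φ unitDisc (SymPolydisc 3))
    (hvan : ∀ i : Fin 3, ∀ n < 2 * ((i : ℕ) + 1),
      taylorCoeff (fun z => sigmaShift (lam * z) (φ z) i) n = 0) :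
    ∃ ψ : ℂ → Matrix (Fin 3) (Fin 3) ℂ, MatHolo ψ ∧
      Set.MapsTo ψ unitDisc (SpectralBall 3) ∧
      (∀ z ∈ unitDisc, sigmaCoeff 3 (ψ z) = φ z) ∧
      ψ 0 = 0 ∧ (∀ i j : Fin 3, deriv (fun z => ψ z i j) 0 =
        (lam • (1 : Matrix (Fin 3) (Fin 3) ℂ)) i j) := by
  have hφi := differentiableOn_pi.1 hφ
  have hdefect (i : Fin 3) :
      DifferentiableOn ℂ (fun z => sigmaShift (lam * z) (φ z) i) unitDisc := by
    fin_cases i <;> simp [sigmaShift] <;> fun_prop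
  choose g hg hfac using fun i =>
    exists_eq_pow_mul_of_taylorCoeff_eq_zero unitDisc_mem_nhds_zero (hdefect i) (hvan i)
  set M : ℂ → Matrix (Fin 3) (Fin 3) ℂ := fun z => companion3 fun i => g i z
  have hM : MatHolo M := by
    intro i j
    fin_cases i <;> fin_cases j <;> simp [M, companion3] <;> fun_prop
  have hσ (z : ℂ) :
      sigmaCoeff 3 (z • lam • (1 : Matrix (Fin 3) (Fin 3) ℂ) + z ^ 2 • M z) = φ z := by
    apply sigmaShift_injective (lam * z)
    rw [← sigmaCoeff_three_sub_smul_one, smul_smul, mul_comm z lam, add_sub_cancel_left]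
    ext i
    rw [sigmaCoeff_three_smul, sigmaCoeff_companion3, hfac, pow_mul]
  refine ⟨fun z => z • lam • 1 + z ^ 2 • M z, hM.smul_add_sq_smul _,
    fun z hz => sigmaCoeff_mem_symPolydisc_iff.1 (hσ z ▸ hφmaps hz), fun z _ => hσ z,
    by simp, hM.deriv_smul_add_sq_smul_apply _⟩

theorem stmt_13_general (lam : ℂ)
    (φ : ℂ → Fin 3 → ℂ) (hφ : DifferentiableOn ℂ φ unitDisc)
    (hφmaps : Set.MapsTo φ unitDisc (SymPolydisc 3)) (hφ0 : φ 0 = 0) :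
    (∃ ψ : ℂ → Matrix (Fin 3) (Fin 3) ℂ, MatHolo ψ ∧
        Set.MapsTo ψ unitDisc (SpectralBall 3) ∧
        (∀ z ∈ unitDisc, sigmaCoeff 3 (ψ z) = φ z) ∧
        ψ 0 = 0 ∧ (∀ i j : Fin 3, deriv (fun z => ψ z i j) 0 =
          (lam • (1 : Matrix (Fin 3) (Fin 3) ℂ)) i j)) ↔
      (deriv (fun z => φ z 0) 0 = 3 * lam ∧
        deriv (fun z => φ z 1) 0 = 0 ∧
        iteratedDeriv 2 (fun z => φ z 1) 0 / 2 = 3 * lam ^ 2 ∧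
        deriv (fun z => φ z 2) 0 = 0 ∧
        iteratedDeriv 2 (fun z => φ z 2) 0 = 0 ∧
        iteratedDeriv 3 (fun z => φ z 2) 0 / (Nat.factorial 3 : ℂ) = lam ^ 3 ∧
        iteratedDeriv 3 (fun z => φ z 1) 0 / (Nat.factorial 3 : ℂ)
          = lam * iteratedDeriv 2 (fun z => φ z 0) 0 ∧
        iteratedDeriv 4 (fun z => φ z 2) 0 / (Nat.factorial 4 : ℂ)
          = lam ^ 2 * iteratedDeriv 2 (fun z => φ z 0) 0 / 2 ∧
        iteratedDeriv 5 (fun z => φ z 2) 0 / (Nat.factorial 5 : ℂ)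
          - lam * iteratedDeriv 4 (fun z => φ z 1) 0 / (Nat.factorial 4 : ℂ)
          + lam ^ 2 * iteratedDeriv 3 (fun z => φ z 0) 0 / (Nat.factorial 3 : ℂ)
          = 0) := by
  have hφa (i : Fin 3) : AnalyticAt ℂ (fun z => φ z i) 0 :=
    (differentiableOn_pi.1 hφ i).analyticAt unitDisc_mem_nhds_zero
  rw [lift_conditions_iff_taylorCoeff_sigmaShift_eq_zero lam hφa hφ0]
  constructor
  · rintro ⟨ψ, hψ, -, hσ, hψ0, hψ'⟩ i n hn
    exact taylorCoeff_sigmaShift_eq_zero_of_lift hψ hσ hψ0 hψ' i hn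
  · exact exists_lift_of_taylorCoeff_sigmaShift_eq_zero hφ hφmaps

/-- Proposition 10: lifting of the spectral Carathéodory–Fejér
problem on `Ω_3` at `0` with scalar derivative datum `λI`, `λ ≠ 0`. -/
theorem stmt_13 (lam : ℂ) (hlam : lam ≠ 0)
    (φ : ℂ → Fin 3 → ℂ) (hφ : DifferentiableOn ℂ φ unitDisc)
    (hφmaps : Set.MapsTo φ unitDisc (SymPolydisc 3)) (hφ0 : φ 0 = 0) :
    (∃ ψ : ℂ → Matrix (Fin 3) (Fin 3) ℂ, MatHolo ψ ∧
        Set.MapsTo ψ unitDisc (SpectralBall 3) ∧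
        (∀ z ∈ unitDisc, sigmaCoeff 3 (ψ z) = φ z) ∧
        ψ 0 = 0 ∧ (∀ i j : Fin 3, deriv (fun z => ψ z i j) 0 =
          (lam • (1 : Matrix (Fin 3) (Fin 3) ℂ)) i j)) ↔
      (deriv (fun z => φ z 0) 0 = 3 * lam ∧
        deriv (fun z => φ z 1) 0 = 0 ∧
        iteratedDeriv 2 (fun z => φ z 1) 0 / 2 = 3 * lam ^ 2 ∧
        deriv (fun z => φ z 2) 0 = 0 ∧
        iteratedDeriv 2 (fun z => φ z 2) 0 = 0 ∧
        iteratedDeriv 3 (fun z => φ z 2) 0 / (Nat.factorial 3 : ℂ) = lam ^ 3 ∧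
        iteratedDeriv 3 (fun z => φ z 1) 0 / (Nat.factorial 3 : ℂ)
          = lam * iteratedDeriv 2 (fun z => φ z 0) 0 ∧
        iteratedDeriv 4 (fun z => φ z 2) 0 / (Nat.factorial 4 : ℂ)
          = lam ^ 2 * iteratedDeriv 2 (fun z => φ z 0) 0 / 2 ∧
        iteratedDeriv 5 (fun z => φ z 2) 0 / (Nat.factorial 5 : ℂ)
          - lam * iteratedDeriv 4 (fun z => φ z 1) 0 / (Nat.factorial 4 : ℂ)
          + lam ^ 2 * iteratedDeriv 3 (fun z => φ z 0) 0 / (Nat.factorial 3 : ℂ)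
          = 0) :=
  stmt_13_general lam φ hφ hφmaps hφ0
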